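/- Bellman recursion for minimal chain lengths: suppose every job has at least one chain to it. Then the minimal chain length satisfies mc(k) = r k + p k for every job k with P k = ∅, and mc(k) = max(r k, min_{i ∈ P k} mc(i)) + p k for every job k with P k ≠ ∅. -/

import Mathlib

def IsChainTo {n : ℕ} (P : Fin n → Finset (Fin n)) (k : Fin n) (L : List (Fin n)) : Prop :=
  L ≠ [] ∧ L.getLast? = some k ∧
    (∀ h, L.head? = some h → P h = ∅) ∧
    L.Chain' (fun a b => a ∈ P b)

/-- Value of a chain: `t 1 = r j₁ + p j₁`, `t (q+1) = max (r j_{q+1}) (t q) + p j_{q+1}`. -/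
def chainValue {n : ℕ} (r p : Fin n → ℕ) : List (Fin n) → ℕ
  | [] => 0
  | j :: rest => rest.foldl (fun t j' => max (r j') t + p j') (r j + p j)

/-- Minimal chain length of job `k`: minimum value over all chains to `k`. -/
noncomputable def mc {n : ℕ} (P : Fin n → Finset (Fin n)) (r p : Fin n → ℕ) (k : Fin n) : ℕ :=
  sInf {v | ∃ L, IsChainTo P k L ∧ chainValue r p L = v}

lemma chainValue_concat {n : ℕ} (r p : Fin n → ℕ) (L : List (Fin n)) (hL : L ≠ []) (k : Fin n) :
    chainValue r p (L ++ [k]) = max (r k) (chainValue r p L) + p k := by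
  cases L with
  | nil => exact absurd rfl hL
  | cons j rest => simp [chainValue, List.foldl_append]

lemma exists_append_of_getLast? {n : ℕ} (L : List (Fin n)) (k : Fin n)
    (h1 : L ≠ []) (h2 : L.getLast? = some k) : ∃ L', L = L' ++ [k] := by
  rcases List.eq_nil_or_concat L with rfl | ⟨L', a, rfl⟩
  · exact absurd rfl h1
  · simp only [List.concat_eq_append] at h2 ⊢
    rw [List.getLast?_concat] at h2
    obtain rfl := Option.some_injective _ h2
    exact ⟨L', rfl⟩

/-- Bellman recursion for minimal chain lengths: `mc k = r k + p k` if `P k = ∅`, and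
`mc k = max (r k) (min_{i ∈ P k} mc i) + p k` otherwise. -/
theorem mc_bellman_recursion {n : ℕ}
    (P : Fin n → Finset (Fin n)) (p r : Fin n → ℕ) (hp : ∀ j, 1 ≤ p j)
    (hchain : ∀ k : Fin n, ∃ L : List (Fin n), IsChainTo P k L) :
    (∀ k : Fin n, P k = ∅ → mc P r p k = r k + p k) ∧
      ∀ k : Fin n, ∀ hk : P k ≠ ∅,
        mc P r p k =
          max (r k) ((P k).inf' (Finset.nonempty_iff_ne_empty.mpr hk) (mc P r p)) + p k := by
  have hne : ∀ k : Fin n, {v | ∃ L, IsChainTo P k L ∧ chainValue r p L = v}.Nonempty := by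
    intro k
    obtain ⟨L, hL⟩ := hchain k
    exact ⟨chainValue r p L, L, hL, rfl⟩
  have hmc_mem : ∀ k : Fin n, ∃ L, IsChainTo P k L ∧ chainValue r p L = mc P r p k :=
    fun k => Nat.sInf_mem (hne k)
  have hmc_le : ∀ (k : Fin n) (L), IsChainTo P k L → mc P r p k ≤ chainValue r p L :=
    fun k L hL => Nat.sInf_le ⟨L, hL, rfl⟩
  constructor
  · intro k hk
    apply le_antisymm
    · have h1 : IsChainTo P k [k] := by
        refine ⟨by simp, by simp, ?_, List.isChain_singleton _⟩
        intro h hh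
        simp at hh
        subst hh
        exact hk
      have := hmc_le k [k] h1
      simpa [chainValue] using this
    · obtain ⟨L, hL, hv⟩ := hmc_mem k
      rw [← hv]
      obtain ⟨L', rfl⟩ := exists_append_of_getLast? L k hL.1 hL.2.1
      rcases eq_or_ne L' [] with rfl | hL'
      · simp [chainValue]
      · rw [chainValue_concat r p L' hL' k]
        have : r k ≤ max (r k) (chainValue r p L') := le_max_left _ _
        omega
  · intro k hk
    set hkne := Finset.nonempty_iff_ne_empty.mpr hk
    obtain ⟨i, hi, hieq⟩ := Finset.exists_mem_eq_inf' hkne (mc P r p)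
    apply le_antisymm
    · obtain ⟨L, hL, hv⟩ := hmc_mem i
      have hLk : IsChainTo P k (L ++ [k]) := by
        obtain ⟨hLne, hlast, hhead, hch⟩ := hL
        refine ⟨by simp, by simp [List.getLast?_concat], ?_, ?_⟩
        · intro h hh
          cases L with
          | nil => exact absurd rfl hLne
          | cons j rest =>
            simp at hh
            subst hh
            exact hhead j rfl
        · change List.IsChain _ (_ ++ _)
          rw [List.isChain_append]
          refine ⟨hch, by simp, ?_⟩
          intro x hx y hy
          simp at hy
          subst hy
          rw [hlast] at hx
          simp at hx
          subst hx
          exact hi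
      have := hmc_le k (L ++ [k]) hLk
      rw [chainValue_concat r p L hL.1 k, hv] at this
      rw [hieq]
      exact this
    · obtain ⟨L, hL, hv⟩ := hmc_mem k
      rw [← hv]
      obtain ⟨L', rfl⟩ := exists_append_of_getLast? L k hL.1 hL.2.1
      obtain ⟨hLne, hlast, hhead, hch⟩ := hL
      rcases eq_or_ne L' [] with rfl | hL'
      · exfalso
        apply hk
        exact hhead k (by simp)
      · obtain ⟨L'', i', rfl⟩ : ∃ L'' i', L' = L'' ++ [i'] := by
          rcases List.eq_nil_or_concat L' with rfl | ⟨L'', i', rfl⟩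
          · exact absurd rfl hL'
          · exact ⟨L'', i', List.concat_eq_append⟩
        change List.IsChain _ (_ ++ _) at hch
        rw [List.isChain_append] at hch
        obtain ⟨hch1, -, hch2⟩ := hch
        have hi' : i' ∈ P k := by
          apply hch2 i' (by simp [List.getLast?_concat]) k
          simp
        have hchain' : IsChainTo P i' (L'' ++ [i']) := by
          refine ⟨by simp, by simp [List.getLast?_concat], ?_, hch1⟩
          intro h hh
          apply hhead h
          cases L'' with
          | nil => simpa using hh
          | cons j rest => simpa using hh
        have h1 : mc P r p i' ≤ chainValue r p (L'' ++ [i']) :=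
          hmc_le i' _ hchain'
        have h2 : (P k).inf' hkne (mc P r p) ≤ mc P r p i' := Finset.inf'_le _ hi'
        rw [chainValue_concat r p (L'' ++ [i']) (by simp) k]
        have : max (r k) ((P k).inf' hkne (mc P r p)) ≤
            max (r k) (chainValue r p (L'' ++ [i'])) :=
          max_le_max le_rfl (le_trans h2 h1)
        omega
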